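/- arXiv:1004.3617 — 2 statements merged into one kernel-verified Lean document; each statement's English description precedes it below -/
import Mathlib

section
/- For a right stochastic matrix A, the spectral radius of Π^⊥ A equals |λ₂(A)|, the second largest eigenvalue of A in absolute value (counting multiplicity, with one copy of the eigenvalue 1 associated to the all-ones eigenvector removed). -/
/-!
Write `𝟙` for the all-ones vector. As `Π = 𝟙 𝟙ᵀ / N`, we have `Π^⊥ A = A - 𝟙 vᵀ` with `vᵀ = 𝟙ᵀ A / N`,
and the unit row sums give `A 𝟙 = 𝟙` and `v ⬝ 𝟙 = 1`. By Brauer's theorem, subtracting `x vᵀ` from a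
matrix with eigenvector `x` of eigenvalue `μ` turns that one eigenvalue into `μ - v ⬝ x` and keeps the
others: `(X - μ) χ_{M - x vᵀ} = (X - μ + v ⬝ x) χ_M`. Here this reads `(X - 1) χ_{Π^⊥ A} = X χ_A`, so
the eigenvalues of `Π^⊥ A` are those of `A` with one copy of `1` replaced by `0`, which does not
change the largest modulus.

Brauer's identity holds over any commutative ring: with `t = X - μ`, the relation
`charmatrix M x = t x` gives `charmatrix M * (t + x vᵀ) = t • (charmatrix M + x vᵀ)`, while
`t det (t + x vᵀ) = tⁿ (t + v ⬝ x)`; the monic factor `tⁿ` cancels.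
-/

open Matrix

def IsStochastic {N : ℕ} (A : Matrix (Fin N) (Fin N) ℝ) : Prop :=
  (∀ i j, 0 ≤ A i j) ∧ ∀ i, ∑ j, A i j = 1

noncomputable def Pi0 (N : ℕ) : Matrix (Fin N) (Fin N) ℝ :=
  Matrix.of fun _ _ => (N : ℝ)⁻¹

noncomputable def Pperp (N : ℕ) : Matrix (Fin N) (Fin N) ℝ := 1 - Pi0 N

/-- Spectral radius: maximum modulus of the (complex) eigenvalues. -/
noncomputable def specRad {N : ℕ} (B : Matrix (Fin N) (Fin N) ℂ) : ℝ :=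
  ((B.charpoly.roots).map fun z => ‖z‖).foldr max 0

/-- `|λ₂(A)|`: the largest modulus among the eigenvalues of `A` (with multiplicity)
after removing one copy of the eigenvalue `1` (the one with the all-ones eigenvector). -/
noncomputable def lam2abs {N : ℕ} (A : Matrix (Fin N) (Fin N) ℝ) : ℝ :=
  ((((A.map (Complex.ofReal ·)).charpoly.roots).erase 1).map fun z => ‖z‖).foldr max 0

open Polynomial

namespace Matrix

variable {n R : Type*} [Fintype n] [DecidableEq n] [CommRing R]

theorem X_mul_charpoly_vecMulVec (u v : n → R) :
    X * (vecMulVec u v).charpoly = X ^ Fintype.card n * (X - C (u ⬝ᵥ v)) := by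
  have h := charpoly_mul_comm' (replicateCol Unit u) (replicateRow Unit v)
  rw [← vecMulVec_eq, Fintype.card_unit, pow_one] at h
  rw [h, charpoly, det_unique, charmatrix_apply_eq, replicateRow_mul_replicateCol_apply,
    dotProduct_comm]

theorem X_sub_C_mul_charpoly_scalar_sub_vecMulVec (μ : R) (x v : n → R) :
    (X - C μ) * (scalar n μ - vecMulVec x v).charpoly =
      (X - C μ) ^ Fintype.card n * (X - C μ + C (v ⬝ᵥ x)) := by
  have h := congrArg (·.comp (X - C μ)) (X_mul_charpoly_vecMulVec (-x) v)
  have hshift : scalar n μ - vecMulVec x v = vecMulVec (-x) v - scalar n (-μ) := by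
    rw [neg_vecMulVec, map_neg]; abel
  simp only [mul_comp, X_comp, pow_comp, sub_comp, neg_dotProduct, map_neg, neg_comp, C_comp] at h
  rw [hshift, charpoly_sub_scalar, map_neg, ← sub_eq_add_neg, h, dotProduct_comm, sub_neg_eq_add]

theorem charmatrix_mulVec_of_mulVec_eq_smul {M : Matrix n n R} {x : n → R} {μ : R}
    (hx : M *ᵥ x = μ • x) : charmatrix M *ᵥ (C ∘ x) = (X - C μ) • (C ∘ x) := by
  ext i
  simp [charmatrix, sub_mulVec, ← RingHom.map_mulVec, hx, sub_mul]

theorem charmatrix_mul_charmatrix_scalar_sub_vecMulVec {M : Matrix n n R} {x : n → R} {μ : R}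
    (hx : M *ᵥ x = μ • x) (v : n → R) :
    charmatrix M * charmatrix (scalar n μ - vecMulVec x v) =
      (X - C μ) • charmatrix (M - vecMulVec x v) := by
  have hmap : (vecMulVec x v).map C = vecMulVec (C ∘ x) (C ∘ v) := by
    ext i j; simp [vecMulVec_apply]
  have hleft : charmatrix (scalar n μ - vecMulVec x v) =
      scalar n (X - C μ) + vecMulVec (C ∘ x) (C ∘ v) := by
    rw [← hmap]; ext i j; by_cases h : i = j <;> simp [h]; ring
  have hright : charmatrix (M - vecMulVec x v) = charmatrix M + vecMulVec (C ∘ x) (C ∘ v) := by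
    rw [← hmap]; ext i j; simp [charmatrix_apply]; ring
  rw [hleft, hright, mul_add, mul_vecMulVec, charmatrix_mulVec_of_mulVec_eq_smul hx, smul_add,
    smul_vecMulVec, (scalar_commute _ (fun _ => Commute.all _ _) _).symm.eq, scalar_apply,
    ← smul_eq_diagonal_mul]

theorem X_sub_C_mul_charpoly_sub_vecMulVec {M : Matrix n n R} {x : n → R} {μ : R}
    (hx : M *ᵥ x = μ • x) (v : n → R) :
    (X - C μ) * (M - vecMulVec x v).charpoly = (X - C μ + C (v ⬝ᵥ x)) * M.charpoly := by
  have hdet : M.charpoly * (scalar n μ - vecMulVec x v).charpoly =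
      (X - C μ) ^ Fintype.card n * (M - vecMulVec x v).charpoly := by
    rw [charpoly, charpoly, charpoly, ← det_mul,
      charmatrix_mul_charmatrix_scalar_sub_vecMulVec hx v, det_smul]
  have hrank_one := X_sub_C_mul_charpoly_scalar_sub_vecMulVec μ x v
  refine ((monic_X_sub_C μ).pow (Fintype.card n)).isRegular.left ?_
  linear_combination (X - C μ) * hdet.symm + M.charpoly * hrank_one

end Matrix

theorem Polynomial.roots_eq_cons_erase_of_X_sub_C_mul_eq {R : Type*} [CommRing R] [IsDomain R]
    [DecidableEq R] {p q : R[X]} {a b : R} (hab : a ≠ b) (hq : q ≠ 0)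
    (h : (X - C a) * p = (X - C b) * q) :
    p.roots = b ::ₘ q.roots.erase a := by
  have hp : p ≠ 0 := by
    rintro rfl
    exact mul_ne_zero (X_sub_C_ne_zero b) hq (by simpa using h.symm)
  have hroots : a ::ₘ p.roots = b ::ₘ q.roots := by
    simpa [roots_mul, hp, hq, X_sub_C_ne_zero, Multiset.singleton_add] using congrArg roots h
  rw [← Multiset.erase_cons_head a p.roots, hroots, Multiset.erase_cons_tail _ hab.symm]

theorem Multiset.foldr_max_cons_self {α : Type*} [LinearOrder α] (b : α) (s : Multiset α) :
    (b ::ₘ s).foldr max b = s.foldr max b := by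
  change Multiset.fold max b _ = Multiset.fold max b _
  rw [Multiset.fold_cons'_right, max_self]

theorem Pperp_mul_eq_sub_vecMulVec (N : ℕ) (A : Matrix (Fin N) (Fin N) ℝ) :
    Pperp N * A = A - vecMulVec 1 ((N : ℝ)⁻¹ • (1 ᵥ* A)) := by
  rw [Pperp, sub_mul, one_mul]
  congr 1
  ext i j
  simp [Pi0, mul_apply, vecMul, dotProduct, Finset.mul_sum]

theorem X_sub_one_mul_charpoly_Pperp_mul {N : ℕ} (hN : 0 < N) {A : Matrix (Fin N) (Fin N) ℝ}
    (hA : ∀ i, ∑ j, A i j = 1) : (X - C 1) * (Pperp N * A).charpoly = X * A.charpoly := by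
  have hones : A *ᵥ 1 = (1 : ℝ) • 1 := by
    ext i; simp [mulVec, dotProduct, hA i]
  have hmass : ((N : ℝ)⁻¹ • (1 ᵥ* A)) ⬝ᵥ 1 = 1 := by
    simp only [dotProduct, vecMul, Pi.smul_apply, Pi.one_apply, one_mul, mul_one, smul_eq_mul]
    rw [← Finset.mul_sum, Finset.sum_comm]
    simp [hA, hN.ne']
  rw [Pperp_mul_eq_sub_vecMulVec, X_sub_C_mul_charpoly_sub_vecMulVec hones, hmass, sub_add_cancel]

/-- For a right stochastic matrix `A`, the spectral radius of `Π^⊥ A` equals `|λ₂(A)|`. -/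
theorem specRad_Pperp_mul_eq_lam2abs {N : ℕ} (hN : 0 < N)
    (A : Matrix (Fin N) (Fin N) ℝ) (hA : IsStochastic A) :
    specRad ((Pperp N * A).map (Complex.ofReal ·)) = lam2abs A := by
  have hchar : (X - C 1) * ((Pperp N * A).map (Complex.ofReal ·)).charpoly =
      (X - C 0) * (A.map (Complex.ofReal ·)).charpoly := by
    have h := congrArg (Polynomial.map Complex.ofRealHom) (X_sub_one_mul_charpoly_Pperp_mul hN hA.2)
    rw [Polynomial.map_mul, Polynomial.map_mul, ← charpoly_map, ← charpoly_map] at h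
    simp only [Polynomial.map_sub, map_X, Polynomial.map_one, map_one, C_0, sub_zero] at h ⊢
    exact h
  have hroots :=
    roots_eq_cons_erase_of_X_sub_C_mul_eq one_ne_zero (charpoly_monic _).ne_zero hchar
  unfold specRad lam2abs
  rw [hroots, Multiset.map_cons, norm_zero, Multiset.foldr_max_cons_self]
end

section
/- For the random sequence X(t) = A(t)X(t−1) with i.i.d. stochastic matrices A(t) and fixed initial state x, the following are equivalent: (1) Π^⊥X(t) → 0 in probability; (2) E[‖Π^⊥X(t)‖] → 0 (stability in L¹); (3) Π^⊥X(t) → 0 almost surely. -/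
open Matrix Filter MeasureTheory ProbabilityTheory

noncomputable instance matrixMeasurableSpace {N : ℕ} : MeasurableSpace (Matrix (Fin N) (Fin N) ℝ) :=
  MeasurableSpace.pi (m := fun _ : Fin N => MeasurableSpace.pi)

/-! The oscillation `diam (range y) = max y - min y` never increases under a stochastic matrix,
since every coordinate of `A *ᵥ y` is a convex combination of those of `y`; and it is comparable
to the deviation from consensus, `‖Π^⊥ y‖ ≤ diam (range y) ≤ 2 ‖Π^⊥ y‖` (the sup norm
`‖Π^⊥ X(t)‖` itself need not be monotone). So `‖Π^⊥ X(t)‖ ≤ diam (range x)` uniformly, and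
almost sure convergence gives `L¹` convergence by dominated convergence, `L¹` convergence gives
convergence in probability by Markov's inequality, and convergence in probability of the
antitone oscillation gives almost sure convergence along a subsequence, hence of the whole
sequence. -/

open Set Metric Topology

theorem Measurable.matrix_mulVec {Ω : Type*} [MeasurableSpace Ω] {N : ℕ}
    {A : Ω → Matrix (Fin N) (Fin N) ℝ} {v : Ω → Fin N → ℝ} (hA : Measurable A)
    (hv : Measurable v) : Measurable fun ω => A ω *ᵥ v ω := by
  refine measurable_pi_lambda _ fun i => ?_
  simp only [mulVec, dotProduct]
  refine Finset.measurable_sum _ fun j _ => ?_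
  exact ((measurable_pi_apply j).comp ((measurable_pi_apply i).comp hA)).mul
    ((measurable_pi_apply j).comp hv)

theorem IsStochastic.mulVec_apply_mem_convexHull {N : ℕ} {A : Matrix (Fin N) (Fin N) ℝ}
    (hA : IsStochastic A) (y : Fin N → ℝ) (i : Fin N) :
    (A *ᵥ y) i ∈ convexHull ℝ (range y) :=
  (convex_convexHull ℝ _).sum_mem (fun j _ => hA.1 i j) (hA.2 i)
    fun j _ => subset_convexHull ℝ _ (mem_range_self j)

theorem IsStochastic.diam_range_mulVec_le {N : ℕ} {A : Matrix (Fin N) (Fin N) ℝ}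
    (hA : IsStochastic A) (y : Fin N → ℝ) : diam (range (A *ᵥ y)) ≤ diam (range y) := by
  refine (diam_mono (range_subset_iff.2 (hA.mulVec_apply_mem_convexHull y)) ?_).trans_eq
    (convexHull_diam _)
  exact isBounded_convexHull.2 (finite_range y).isBounded

theorem isStochastic_Pi0 {N : ℕ} [NeZero N] : IsStochastic (Pi0 N) := by
  refine ⟨fun _ _ => by simp [Pi0], fun _ => ?_⟩
  simp [Pi0, Finset.card_univ, NeZero.ne N]

theorem Pi0_mulVec_apply_eq {N : ℕ} (y : Fin N → ℝ) (i j : Fin N) :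
    (Pi0 N *ᵥ y) i = (Pi0 N *ᵥ y) j := by
  simp [Pi0, mulVec, dotProduct]

theorem Pperp_mulVec_apply {N : ℕ} (y : Fin N → ℝ) (i : Fin N) :
    (Pperp N *ᵥ y) i = y i - (Pi0 N *ᵥ y) i := by
  simp [Pperp, sub_mulVec]

theorem norm_Pperp_mulVec_le_diam_range {N : ℕ} (y : Fin N → ℝ) :
    ‖Pperp N *ᵥ y‖ ≤ diam (range y) := by
  refine (pi_norm_le_iff_of_nonneg diam_nonneg).2 fun i => ?_
  have : NeZero N := ⟨i.pos.ne'⟩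
  rw [Pperp_mulVec_apply, ← dist_eq_norm, ← convexHull_diam]
  exact dist_le_diam_of_mem (isBounded_convexHull.2 (finite_range y).isBounded)
    (subset_convexHull ℝ _ (mem_range_self i)) (isStochastic_Pi0.mulVec_apply_mem_convexHull y i)

theorem diam_range_le_two_mul_norm_Pperp_mulVec {N : ℕ} (y : Fin N → ℝ) :
    diam (range y) ≤ 2 * ‖Pperp N *ᵥ y‖ := by
  have hdev : ∀ i, dist (y i) ((Pi0 N *ᵥ y) i) ≤ ‖Pperp N *ᵥ y‖ := fun i => by
    simpa [Real.dist_eq, Pperp_mulVec_apply] using norm_le_pi_norm (Pperp N *ᵥ y) i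
  refine diam_le_of_forall_dist_le (by positivity) ?_
  rintro _ ⟨i, rfl⟩ _ ⟨j, rfl⟩
  calc dist (y i) (y j) ≤ dist (y i) ((Pi0 N *ᵥ y) i) + dist (y j) ((Pi0 N *ᵥ y) i) :=
        dist_triangle_right _ _ _
    _ ≤ ‖Pperp N *ᵥ y‖ + ‖Pperp N *ᵥ y‖ :=
        add_le_add (hdev i) (by rw [Pi0_mulVec_apply_eq y i j]; exact hdev j)
    _ = 2 * ‖Pperp N *ᵥ y‖ := (two_mul _).symm

namespace MeasureTheory

variable {Ω ι E : Type*} [MeasurableSpace Ω] {μ : Measure Ω} [NormedAddCommGroup E]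

theorem TendstoInMeasure.of_norm_le_mul {F : Type*} [NormedAddCommGroup F] {l : Filter ι}
    {f : ι → Ω → E} {g : ι → Ω → F} {C : ℝ} (hC : 0 < C)
    (hgf : ∀ i ω, ‖g i ω‖ ≤ C * ‖f i ω‖) (hf : TendstoInMeasure μ f l 0) :
    TendstoInMeasure μ g l 0 := by
  simp only [tendstoInMeasure_iff_norm, Pi.zero_apply, sub_zero] at hf ⊢
  intro ε hε
  refine tendsto_of_tendsto_of_tendsto_of_le_of_le tendsto_const_nhds (hf (ε / C) (div_pos hε hC))
    (fun _ => zero_le) fun i => measure_mono fun ω (hω : ε ≤ ‖g i ω‖) => ?_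
  exact (div_le_iff₀' hC).2 (hω.trans (hgf i ω))

theorem TendstoInMeasure.ae_tendsto_of_antitone {g : ℕ → Ω → ℝ} {g₀ : Ω → ℝ}
    (hg : TendstoInMeasure μ g atTop g₀) (hanti : ∀ ω, Antitone fun t => g t ω) :
    ∀ᵐ ω ∂μ, Tendsto (fun t => g t ω) atTop (𝓝 (g₀ ω)) := by
  obtain ⟨ns, hns, hae⟩ := hg.exists_seq_tendsto_ae
  filter_upwards [hae] with ω hω
  exact (tendsto_iff_tendsto_subseq_of_antitone (hanti ω) hns.tendsto_atTop).2 hω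

theorem tendstoInMeasure_of_tendsto_integral_norm {l : Filter ι} {f : ι → Ω → E}
    (hf : ∀ i, Integrable (f i) μ) (h : Tendsto (fun i => ∫ ω, ‖f i ω‖ ∂μ) l (𝓝 0)) :
    TendstoInMeasure μ f l 0 := by
  refine tendstoInMeasure_of_tendsto_eLpNorm one_ne_zero (fun i => (hf i).aestronglyMeasurable)
    aestronglyMeasurable_const ?_
  simp only [sub_zero, eLpNorm_one_eq_lintegral_enorm,
    ← fun i => ofReal_integral_norm_eq_lintegral_enorm (hf i)]
  simpa using ENNReal.tendsto_ofReal h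

theorem tendsto_integral_norm_of_ae_tendsto_of_norm_le [IsFiniteMeasure μ] {f : ℕ → Ω → E}
    {C : ℝ} (hf : ∀ t, AEStronglyMeasurable (f t) μ) (hC : ∀ t ω, ‖f t ω‖ ≤ C)
    (h : ∀ᵐ ω ∂μ, Tendsto (fun t => f t ω) atTop (𝓝 0)) :
    Tendsto (fun t => ∫ ω, ‖f t ω‖ ∂μ) atTop (𝓝 0) := by
  simpa using tendsto_integral_of_dominated_convergence (fun _ => C) (fun t => (hf t).norm)
    (integrable_const C) (fun t => ae_of_all _ fun ω => (norm_norm (f t ω)).trans_le (hC t ω))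
    (h.mono fun ω hω => hω.norm)

end MeasureTheory

section Trajectory

variable {Ω : Type*} {N : ℕ} {A : ℕ → Ω → Matrix (Fin N) (Fin N) ℝ} {X : ℕ → Ω → Fin N → ℝ}

theorem measurable_of_mulVec_recursion [MeasurableSpace Ω] (hA : ∀ t, Measurable (A t))
    (hX0 : Measurable (X 0)) (hrec : ∀ t ω, X (t + 1) ω = A (t + 1) ω *ᵥ X t ω) (t : ℕ) :
    Measurable (X t) := by
  induction t with
  | zero => exact hX0
  | succ t ih => simpa only [funext (hrec t)] using (hA (t + 1)).matrix_mulVec ih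

theorem antitone_diam_range_of_mulVec_recursion (hA : ∀ t ω, IsStochastic (A t ω))
    (hrec : ∀ t ω, X (t + 1) ω = A (t + 1) ω *ᵥ X t ω) (ω : Ω) :
    Antitone fun t => diam (range (X t ω)) :=
  antitone_nat_of_succ_le fun t => (hrec t ω).symm ▸ (hA (t + 1) ω).diam_range_mulVec_le _

end Trajectory

theorem projected_stability_three_modes_equiv_general {N : ℕ} {Ω : Type*} [MeasurableSpace Ω]
    (P : Measure Ω) [IsProbabilityMeasure P]
    (A : ℕ → Ω → Matrix (Fin N) (Fin N) ℝ)
    (hmeas : ∀ t, Measurable (A t))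
    (hstoch : ∀ t ω, IsStochastic (A t ω))
    (x : Fin N → ℝ) (X : ℕ → Ω → Fin N → ℝ)
    (hX0 : X 0 = fun _ => x)
    (hrec : ∀ t ω, X (t + 1) ω = (A (t + 1) ω).mulVec (X t ω)) :
    ((∀ ε > (0:ℝ), Tendsto (fun t => P {ω | ε ≤ ‖(Pperp N).mulVec (X t ω)‖})
        atTop (nhds 0)) ↔
      Tendsto (fun t => ∫ ω, ‖(Pperp N).mulVec (X t ω)‖ ∂P) atTop (nhds 0)) ∧
    (Tendsto (fun t => ∫ ω, ‖(Pperp N).mulVec (X t ω)‖ ∂P) atTop (nhds 0) ↔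
      ∀ᵐ ω ∂P, Tendsto (fun t => (Pperp N).mulVec (X t ω)) atTop (nhds 0)) := by
  have hanti := antitone_diam_range_of_mulVec_recursion hstoch hrec
  have hmeasX := measurable_of_mulVec_recursion hmeas (hX0 ▸ measurable_const) hrec
  have hfm t : AEStronglyMeasurable (fun ω => Pperp N *ᵥ X t ω) P :=
    (measurable_const.matrix_mulVec (hmeasX t)).aestronglyMeasurable
  have hbound t ω : ‖Pperp N *ᵥ X t ω‖ ≤ diam (range x) :=
    (norm_Pperp_mulVec_le_diam_range _).trans (by simpa [hX0] using hanti ω (Nat.zero_le t))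
  have hprob : (∀ ε > (0:ℝ), Tendsto (fun t => P {ω | ε ≤ ‖Pperp N *ᵥ X t ω‖}) atTop (𝓝 0)) ↔
      TendstoInMeasure P (fun t ω => Pperp N *ᵥ X t ω) atTop 0 := by
    simp only [tendstoInMeasure_iff_norm, Pi.zero_apply, sub_zero, gt_iff_lt]
  have ae_of_inMeasure : TendstoInMeasure P (fun t ω => Pperp N *ᵥ X t ω) atTop 0 →
      ∀ᵐ ω ∂P, Tendsto (fun t => Pperp N *ᵥ X t ω) atTop (𝓝 0) := fun h => by
    have hdiam : TendstoInMeasure P (fun t ω => diam (range (X t ω))) atTop 0 :=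
      h.of_norm_le_mul two_pos fun t ω => (Real.norm_of_nonneg diam_nonneg).trans_le
        (diam_range_le_two_mul_norm_Pperp_mulVec _)
    filter_upwards [hdiam.ae_tendsto_of_antitone hanti] with ω hω
    exact tendsto_zero_iff_norm_tendsto_zero.2 <|
      squeeze_zero (fun _ => norm_nonneg _) (fun _ => norm_Pperp_mulVec_le_diam_range _) hω
  have integral_of_ae := tendsto_integral_norm_of_ae_tendsto_of_norm_le hfm hbound
  have inMeasure_of_integral := tendstoInMeasure_of_tendsto_integral_norm (l := atTop) fun t =>
    Integrable.of_bound (hfm t) _ (ae_of_all _ (hbound t))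
  rw [hprob]
  exact ⟨⟨integral_of_ae ∘ ae_of_inMeasure, inMeasure_of_integral⟩,
    ⟨ae_of_inMeasure ∘ inMeasure_of_integral, integral_of_ae⟩⟩

/-- For the random dynamics `X(t) = A(t) X(t-1)` driven by i.i.d. random stochastic
matrices with fixed initial state `x`, stability of `Π^⊥ X(t)` in probability,
in `L¹`, and almost surely are all equivalent. -/
theorem projected_stability_three_modes_equiv {N : ℕ} {Ω : Type*} [MeasurableSpace Ω]
    (P : Measure Ω) [IsProbabilityMeasure P]
    (A : ℕ → Ω → Matrix (Fin N) (Fin N) ℝ)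
    (hmeas : ∀ t, Measurable (A t))
    (hstoch : ∀ t ω, IsStochastic (A t ω))
    (hindep : iIndepFun A P)
    (hident : ∀ s t, Measure.map (A s) P = Measure.map (A t) P)
    (x : Fin N → ℝ) (X : ℕ → Ω → Fin N → ℝ)
    (hX0 : X 0 = fun _ => x)
    (hrec : ∀ t ω, X (t + 1) ω = (A (t + 1) ω).mulVec (X t ω)) :
    ((∀ ε > (0:ℝ), Tendsto (fun t => P {ω | ε ≤ ‖(Pperp N).mulVec (X t ω)‖})
        atTop (nhds 0)) ↔
      Tendsto (fun t => ∫ ω, ‖(Pperp N).mulVec (X t ω)‖ ∂P) atTop (nhds 0)) ∧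
    (Tendsto (fun t => ∫ ω, ‖(Pperp N).mulVec (X t ω)‖ ∂P) atTop (nhds 0) ↔
      ∀ᵐ ω ∂P, Tendsto (fun t => (Pperp N).mulVec (X t ω)) atTop (nhds 0)) :=
  projected_stability_three_modes_equiv_general P A hmeas hstoch x X hX0 hrec
end
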